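/- arXiv:1210.1386 — 3 statements merged into one kernel-verified Lean document; each statement's English description precedes it below -/
import Mathlib

section
/- Let $X$ be a compact metric space, let $n \geq 0$, and suppose that for every finite open cover $\mathcal{U}$ of $X$ and every $\epsilon > 0$ there exist continuous functions $b_j^{(i)} : X \to [0,\infty)$ for $i = 0, \dots, n$ and $j = 1, \dots, r$ such that: (a) for each $i$, the functions $b_1^{(i)}, \dots, b_r^{(i)}$ have pairwise disjoint supports; (b) each $b_j^{(i)}$ is supported in some member of $\mathcal{U}$; (c) $\|\sum_{i,j} b_j^{(i)} - 1\|_\infty \leq \epsilon$. Then the covering dimension of $X$ is at most $n$. -/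
/-!
The sets `{b⁽ⁱ⁾ⱼ > 0}` already form the required refinement: they are open, each lies in a
member of the cover, they cover `X` because `∑ b⁽ⁱ⁾ⱼ` is within `ε < 1` of `1`, and a point lies
in at most one of them per colour `i`, since functions of one colour have disjoint supports.
-/

/-- Covering dimension at most `n`: every finite open cover admits a finite open
refinement in which no point lies in more than `n+1` members. -/
def CovDimLE (X : Type*) [TopologicalSpace X] (n : ℕ) : Prop :=
  ∀ (N : ℕ) (U : Fin N → Set X), (∀ i, IsOpen (U i)) → (⋃ i, U i) = Set.univ →
    ∃ (M : ℕ) (V : Fin M → Set X),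
      (∀ k, IsOpen (V k)) ∧ (⋃ k, V k) = Set.univ ∧
      (∀ k, ∃ i, V k ⊆ U i) ∧
      ∀ x : X, ({k | x ∈ V k} : Set (Fin M)).ncard ≤ n + 1

theorem Finset.exists_pos_of_abs_sum_sub_one_lt_one {ι : Type*} {s : Finset ι} {f : ι → ℝ}
    (h : |∑ i ∈ s, f i - 1| < 1) : ∃ i ∈ s, 0 < f i := by
  by_contra! hf
  have := Finset.sum_nonpos hf
  rw [abs_lt] at h
  linarith

theorem Set.ncard_le_card_of_injOn_fst {ι κ : Type*} [Finite ι] {s : Set (ι × κ)}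
    (hs : s.InjOn Prod.fst) : s.ncard ≤ Nat.card ι :=
  hs.ncard_image ▸ Set.ncard_le_card _

theorem covDimLE_of_fintype_refinements {X : Type*} [TopologicalSpace X] {n : ℕ}
    (h : ∀ (N : ℕ) (U : Fin N → Set X), (∀ i, IsOpen (U i)) → (⋃ i, U i) = Set.univ →
      ∃ (ι : Type) (_ : Fintype ι) (V : ι → Set X),
        (∀ k, IsOpen (V k)) ∧ (⋃ k, V k) = Set.univ ∧ (∀ k, ∃ i, V k ⊆ U i) ∧
        ∀ x, {k | x ∈ V k}.ncard ≤ n + 1) :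
    CovDimLE X n := by
  intro N U hUo hUc
  obtain ⟨ι, _, V, hVo, hVc, hVU, hVord⟩ := h N U hUo hUc
  let e := (Fintype.equivFin ι).symm
  refine ⟨Fintype.card ι, V ∘ e, fun k => hVo (e k), ?_, fun k => hVU (e k), fun x => ?_⟩
  · rwa [Function.comp_def, e.surjective.iUnion_comp V]
  · change (e ⁻¹' {k | x ∈ V k}).ncard ≤ n + 1
    rw [Set.ncard_preimage_of_injective_subset_range e.injective (by simp)]
    exact hVord x

section PositivitySets

variable {X : Type*} [TopologicalSpace X]

theorem isOpen_setOf_pos {ι : Type*} (b : ι → C(X, ℝ)) (k : ι) : IsOpen {x | 0 < b k x} :=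
  isOpen_lt continuous_const (b k).continuous

theorem iUnion_setOf_pos_eq_univ {ι : Type*} [Fintype ι] (b : ι → C(X, ℝ))
    (hb : ∀ x, |∑ k, b k x - 1| < 1) : ⋃ k, {x | 0 < b k x} = Set.univ :=
  Set.eq_univ_of_forall fun x => by
    obtain ⟨k, -, hk⟩ := Finset.exists_pos_of_abs_sum_sub_one_lt_one (hb x)
    exact Set.mem_iUnion.2 ⟨k, hk⟩

theorem setOf_pos_subset {f : C(X, ℝ)} {U : Set X} (hf : ∀ x, x ∉ U → f x = 0) :
    {x | 0 < f x} ⊆ U :=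
  fun x hx => by_contra fun hxU => hx.ne' (hf x hxU)

theorem injOn_fst_setOf_pos {ι κ : Type*} (b : ι → κ → C(X, ℝ))
    (hb : ∀ i j j', j ≠ j' → ∀ x, b i j x * b i j' x = 0) (x : X) :
    {p : ι × κ | 0 < b p.1 p.2 x}.InjOn Prod.fst := by
  rintro ⟨i, j⟩ hj ⟨i', j'⟩ hj' (rfl : i = i')
  by_contra hne
  have := hb i j j' (fun h => hne (h ▸ rfl)) x
  exact (mul_pos hj hj').ne' this

end PositivitySets

theorem covdim_of_colourable_partitions_general {X : Type*} [MetricSpace X]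
    (n : ℕ)
    (H : ∀ (N : ℕ) (U : Fin N → Set X), (∀ i, IsOpen (U i)) → (⋃ i, U i) = Set.univ →
      ∀ ε : ℝ, 0 < ε →
        ∃ (r : ℕ) (b : Fin (n + 1) → Fin r → C(X, ℝ)),
          (∀ i j y, 0 ≤ b i j y) ∧
          (∀ i j j', j ≠ j' → ∀ y, b i j y * b i j' y = 0) ∧
          (∀ i j, ∃ l, ∀ y, y ∉ U l → b i j y = 0) ∧
          (∀ y, |(∑ i, ∑ j, b i j y) - 1| ≤ ε)) :
    CovDimLE X n := by
  refine covDimLE_of_fintype_refinements fun N U hUo hUc => ?_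
  obtain ⟨r, b, -, hdisj, hsupp, happrox⟩ := H N U hUo hUc (1 / 2) (by norm_num)
  let c : Fin (n + 1) × Fin r → C(X, ℝ) := fun p => b p.1 p.2
  refine ⟨_, inferInstance, fun p => {x | 0 < c p x}, isOpen_setOf_pos c,
    iUnion_setOf_pos_eq_univ c fun x => ?_, fun p => ?_, fun x => ?_⟩
  · rw [Fintype.sum_prod_type]
    exact (happrox x).trans_lt (by norm_num)
  · obtain ⟨l, hl⟩ := hsupp p.1 p.2
    exact ⟨l, setOf_pos_subset hl⟩
  · simpa using Set.ncard_le_card_of_injOn_fst (injOn_fst_setOf_pos b hdisj x)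

/-- If every finite open cover of `X` admits `(n+1)`-colourable approximate
finite partitions of unity subordinate to it, then `dim X ≤ n`. -/
theorem covdim_of_colourable_partitions {X : Type*} [MetricSpace X] [CompactSpace X]
    (n : ℕ)
    (H : ∀ (N : ℕ) (U : Fin N → Set X), (∀ i, IsOpen (U i)) → (⋃ i, U i) = Set.univ →
      ∀ ε : ℝ, 0 < ε →
        ∃ (r : ℕ) (b : Fin (n + 1) → Fin r → C(X, ℝ)),
          (∀ i j y, 0 ≤ b i j y) ∧
          (∀ i j j', j ≠ j' → ∀ y, b i j y * b i j' y = 0) ∧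
          (∀ i j, ∃ l, ∀ y, y ∉ U l → b i j y = 0) ∧
          (∀ y, |(∑ i, ∑ j, b i j y) - 1| ≤ ε)) :
    CovDimLE X n :=
  covdim_of_colourable_partitions_general n H
end

section
/- Let $X$ be a compact metric space, $\mathcal{U}$ a finite open cover, $(x_U)_{U \in \mathcal{U}}$ chosen points $x_U \in U$, and $(a_U)_{U \in \mathcal{U}}$ continuous functions $X \to [0,1]$ with $a_U$ vanishing outside $U$ and $\|1 - \sum_U a_U\|_\infty \leq \epsilon/2$. Define $\psi : C(X) \to \mathbb{C}^{\mathcal{U}}$ by $\psi(f) = (f(x_U))_U$ and $\phi : \mathbb{C}^{\mathcal{U}} \to C(X)$ by $\phi((\lambda_U)_U) = \sum_U \lambda_U a_U$. Then $\psi$ is a unital $*$-homomorphism, $\phi$ is a positive linear map with $\|\phi\| \leq \max(1, \|\sum_U a_U\|_\infty)$, and for every $f \in C(X)$ with $\|f\| \leq 1$ such that $|f(x) - f(x_U)| < \epsilon/2$ for all $U$ and $x \in U$, one has $\|\phi(\psi(f)) - f\|_\infty < \epsilon$. -/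
/-! At a point `y`,
`(∑ j, f (x j) • a j - f) y = ∑ j, a j y * (f (x j) - f y) + f y * (∑ j, a j y - 1)`.
Since `a j y ≠ 0` forces `y ∈ U j`, the first sum is a combination of terms of size `< ε / 2`
with nonnegative weights of total mass at most `1`; the second term is bounded by
`‖1 - ∑ j, a j‖ ≤ ε / 2`. -/

open Finset

section

variable {X : Type*} (S R : Type*) [TopologicalSpace X] [CommSemiring S] [CommSemiring R]
  [Algebra S R] [TopologicalSpace R] [IsTopologicalSemiring R] [StarRing R] [ContinuousStar R]

def ContinuousMap.evalPiStarAlgHom {ι : Type*} (x : ι → X) : C(X, R) →⋆ₐ[S] (ι → R) :=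
  { AlgHom.pi fun i => ContinuousMap.evalAlgHom S R (x i) with
    map_star' := fun _ => rfl }

end

theorem abs_sum_mul_lt_of_sum_le_one {ι : Type*} [Fintype ι] {w c : ι → ℝ} {δ : ℝ}
    (hδ : 0 < δ) (hw : ∀ i, 0 ≤ w i) (hsum : ∑ i, w i ≤ 1)
    (hc : ∀ i, w i ≠ 0 → |c i| < δ) : |∑ i, w i * c i| < δ := by
  by_cases hzero : ∀ i, w i = 0
  · simpa [hzero] using hδ
  obtain ⟨i₀, hi₀⟩ := not_forall.1 hzero
  have hterm : ∀ i, |w i * c i| ≤ w i * δ := fun i => by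
    rw [abs_mul, abs_of_nonneg (hw i)]
    rcases eq_or_ne (w i) 0 with h | h
    · simp [h]
    · exact mul_le_mul_of_nonneg_left (hc i h).le (hw i)
  calc |∑ i, w i * c i| ≤ ∑ i, |w i * c i| := abs_sum_le_sum_abs _ _
    _ < ∑ i, w i * δ := by
      refine sum_lt_sum (fun i _ => hterm i) ⟨i₀, mem_univ _, ?_⟩
      rw [abs_mul, abs_of_nonneg (hw i₀)]
      exact mul_lt_mul_of_pos_left (hc i₀ hi₀) ((hw i₀).lt_of_ne' hi₀)
    _ = (∑ i, w i) * δ := by rw [sum_mul]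
    _ ≤ δ := mul_le_of_le_one_left hδ.le hsum

namespace ContinuousMap

variable {X ι : Type*} [TopologicalSpace X] [CompactSpace X] [Fintype ι]

theorem norm_sum_smul_le_of_nonneg {a : ι → C(X, ℝ)} (ha : ∀ i y, 0 ≤ a i y) (lam : ι → ℝ) :
    ‖∑ i, lam i • a i‖ ≤ ‖lam‖ * ‖∑ i, a i‖ := by
  refine (norm_le _ (by positivity)).2 fun y => ?_
  calc ‖(∑ i, lam i • a i) y‖ = |∑ i, lam i * a i y| := by simp
    _ ≤ ∑ i, |lam i| * a i y := by
      refine (abs_sum_le_sum_abs _ _).trans_eq (sum_congr rfl fun i _ => ?_)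
      rw [abs_mul, abs_of_nonneg (ha i y)]
    _ ≤ ∑ i, ‖lam‖ * a i y := by
      gcongr with i
      · exact ha i y
      · exact norm_le_pi_norm lam i
    _ = ‖lam‖ * (∑ i, a i) y := by simp [mul_sum]
    _ ≤ ‖lam‖ * ‖∑ i, a i‖ := by
      gcongr
      exact (Real.le_norm_self _).trans (norm_coe_le_norm _ y)

theorem norm_sum_eval_smul_sub_lt {U : ι → Set X} {x : ι → X} {a : ι → C(X, ℝ)} {ε : ℝ}
    (hε : 0 < ε) (ha : ∀ i y, 0 ≤ a i y) (hsupp : ∀ i y, y ∉ U i → a i y = 0)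
    (hclose : ‖1 - ∑ i, a i‖ ≤ ε / 2) (hle1 : ∀ y, ∑ i, a i y ≤ 1)
    {f : C(X, ℝ)} (hf : ‖f‖ ≤ 1) (hfU : ∀ i, ∀ y ∈ U i, |f y - f (x i)| < ε / 2) :
    ‖(∑ i, f (x i) • a i) - f‖ < ε := by
  refine (norm_lt_iff _ hε).2 fun y => ?_
  have hsplit : ((∑ i, f (x i) • a i) - f) y
      = ∑ i, a i y * (f (x i) - f y) + f y * (∑ i, a i y - 1) := by
    simp [mul_sub, sum_sub_distrib, mul_sum, mul_comm]
  have hlocal : |∑ i, a i y * (f (x i) - f y)| < ε / 2 :=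
    abs_sum_mul_lt_of_sum_le_one (half_pos hε) (ha · y) (hle1 y) fun i hi => by
      rw [abs_sub_comm]
      exact hfU i y (not_imp_comm.1 (hsupp i y) hi)
  have hglobal : |f y * (∑ i, a i y - 1)| ≤ ε / 2 := by
    have hfy : |f y| ≤ 1 := (norm_coe_le_norm f y).trans hf
    have hsum : |∑ i, a i y - 1| ≤ ε / 2 := by
      rw [abs_sub_comm]
      simpa using (norm_coe_le_norm (1 - ∑ i, a i) y).trans hclose
    rw [abs_mul]
    simpa using mul_le_mul hfy hsum (abs_nonneg _) zero_le_one
  rw [Real.norm_eq_abs, hsplit]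
  linarith [abs_add_le (∑ i, a i y * (f (x i) - f y)) (f y * (∑ i, a i y - 1))]

end ContinuousMap

theorem commutative_factorization_general {X : Type*} [MetricSpace X] [CompactSpace X]
    (r : ℕ) (U : Fin r → Set X)
    (x : Fin r → X)
    (a : Fin r → C(X, ℝ)) (ha01 : ∀ j, ∀ y, a j y ∈ Set.Icc (0:ℝ) 1)
    (hsupp : ∀ j, ∀ y, y ∉ U j → a j y = 0)
    (ε : ℝ) (hε : 0 < ε)
    (hclose : ‖(1 : C(X, ℝ)) - ∑ j, a j‖ ≤ ε / 2)
    (hle1 : ∀ y, ∑ j, a j y ≤ 1) :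
    ∃ ψ : C(X, ℝ) →⋆ₐ[ℝ] (Fin r → ℝ),
      (∀ f j, ψ f j = f (x j)) ∧
      (∀ lam : Fin r → ℝ, (∀ j, 0 ≤ lam j) → ∀ y, 0 ≤ ∑ j, lam j * a j y) ∧
      (∀ lam : Fin r → ℝ,
        ‖∑ j, lam j • a j‖ ≤ max 1 ‖∑ j, a j‖ * ‖lam‖) ∧
      (∀ f : C(X, ℝ), ‖f‖ ≤ 1 →
        (∀ j, ∀ y ∈ U j, |f y - f (x j)| < ε / 2) →
        ‖(∑ j, f (x j) • a j) - f‖ < ε) := by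
  have ha : ∀ j y, 0 ≤ a j y := fun j y => (ha01 j y).1
  refine ⟨ContinuousMap.evalPiStarAlgHom ℝ ℝ x, fun _ _ => rfl, ?_, ?_, ?_⟩
  · exact fun lam hlam y => sum_nonneg fun j _ => mul_nonneg (hlam j) (ha j y)
  · intro lam
    calc ‖∑ j, lam j • a j‖ ≤ ‖lam‖ * ‖∑ j, a j‖ :=
        ContinuousMap.norm_sum_smul_le_of_nonneg ha lam
      _ ≤ max 1 ‖∑ j, a j‖ * ‖lam‖ := by
        rw [mul_comm]
        gcongr
        exact le_max_right _ _
  · exact fun f hf hfU =>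
      ContinuousMap.norm_sum_eval_smul_sub_lt hε ha hsupp hclose hle1 hf hfU

/-- The commutative decomposition-rank factorization of Proposition 3.2
(iv) ⇒ (iii): point evaluations `ψ` and a subordinate approximate partition of
unity `φ` give a factorization of the identity of `C(X)` through `ℝ^𝒰`. -/
theorem commutative_factorization {X : Type*} [MetricSpace X] [CompactSpace X]
    (r : ℕ) (U : Fin r → Set X) (hUopen : ∀ j, IsOpen (U j))
    (hUcover : (⋃ j, U j) = Set.univ)
    (x : Fin r → X) (hx : ∀ j, x j ∈ U j)
    (a : Fin r → C(X, ℝ)) (ha01 : ∀ j, ∀ y, a j y ∈ Set.Icc (0:ℝ) 1)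
    (hsupp : ∀ j, ∀ y, y ∉ U j → a j y = 0)
    (ε : ℝ) (hε : 0 < ε)
    (hclose : ‖(1 : C(X, ℝ)) - ∑ j, a j‖ ≤ ε / 2)
    (hle1 : ∀ y, ∑ j, a j y ≤ 1) :
    ∃ ψ : C(X, ℝ) →⋆ₐ[ℝ] (Fin r → ℝ),
      (∀ f j, ψ f j = f (x j)) ∧
      (∀ lam : Fin r → ℝ, (∀ j, 0 ≤ lam j) → ∀ y, 0 ≤ ∑ j, lam j * a j y) ∧
      (∀ lam : Fin r → ℝ,
        ‖∑ j, lam j • a j‖ ≤ max 1 ‖∑ j, a j‖ * ‖lam‖) ∧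
      (∀ f : C(X, ℝ), ‖f‖ ≤ 1 →
        (∀ j, ∀ y ∈ U j, |f y - f (x j)| < ε / 2) →
        ‖(∑ j, f (x j) • a j) - f‖ < ε) :=
  commutative_factorization_general r U x a ha01 hsupp ε hε hclose hle1
end

section
/- Let $Y$ be a compact metric space and suppose $C(Y)$ (continuous complex-valued functions) contains a unital subalgebra isomorphic to $C(X)$ for a compact metric space $X$ (i.e., there is a unital injective $*$-homomorphism $C(X) \to C(Y)$). If $Y$ has covering dimension at most $n$, then the inclusion $C(X) \hookrightarrow C(Y)$ admits, for every finite set $\mathcal{F} \subset C(X)$ and $\epsilon > 0$, a factorization $C(X) \xrightarrow{\psi} F \xrightarrow{\phi} C(Y)$ with $F$ a finite-dimensional commutative C*-algebra, $\psi$ a unital $*$-homomorphism, $\phi$ positive contractive and $(n+1)$-colourable (i.e., $F = F^{(0)} \oplus \cdots \oplus F^{(n)}$ and $\phi|_{F^{(i)}}$ maps orthogonal elements to orthogonal elements), such that $\|\phi(\psi(f)) - f\| < \epsilon$ for all $f \in \mathcal{F}$. -/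
/-!
Refine a cover of `Y` by sets on which the functions `ι f`, `f ∈ F`, vary little to an open cover
`(V j)` of multiplicity at most `n + 1`, and take a partition of unity `(f j)` subordinate to it.
For a finite set `S` of indices let `W S` be the open set where the `f j` with `j ∈ S` are positive
and strictly larger than all the others. The sets `W S` cover `Y`, a nonempty `W S` lies in every
`V j` with `j ∈ S` (so `#S ≤ n + 1`), and `W S`, `W T` are disjoint when `S ≠ T` have the same
cardinality. A partition of unity `(g S)` subordinate to `(W S)` is therefore `(n + 1)`-colourable
by `#S`. With points `p S ∈ W S`, put `ψ f = (ι f (p S))_S` and `φ v = ∑ v_S g_S`: then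
`φ (ψ f)` is a convex combination of values of `ι f` at points close to the point of evaluation.
-/

open scoped ComplexOrder

open Set Finset

section DominantSet

variable {Y ι : Type*} {f : ι → Y → ℝ} {S T : Finset ι} {y : Y}

def dominantSet (f : ι → Y → ℝ) (S : Finset ι) : Set Y :=
  {y | S.Nonempty ∧ ∀ j ∈ S, 0 < f j y ∧ ∀ l ∉ S, f l y < f j y}

theorem isOpen_dominantSet [TopologicalSpace Y] [Finite ι] (hf : ∀ j, Continuous (f j))
    (S : Finset ι) : IsOpen (dominantSet f S) := by
  simp only [dominantSet, ofPred_and, ofPred_forall]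
  exact isOpen_const.inter <| isOpen_iInter_of_finite fun j => isOpen_iInter_of_finite fun _ =>
    (isOpen_lt continuous_const (hf j)).inter <| isOpen_iInter_of_finite fun l =>
      isOpen_iInter_of_finite fun _ => isOpen_lt (hf l) (hf j)

theorem disjoint_dominantSet (hST : S ≠ T) (hcard : #S = #T) :
    Disjoint (dominantSet f S) (dominantSet f T) := by
  obtain ⟨j, hjS, hjT⟩ := Finset.not_subset.1 fun h =>
    hST (Finset.eq_of_subset_of_card_le h hcard.ge)
  obtain ⟨l, hlT, hlS⟩ := Finset.not_subset.1 fun h =>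
    hST (Finset.eq_of_subset_of_card_le h hcard.le).symm
  refine Set.disjoint_left.2 fun y hyS hyT => ?_
  exact (hyS.2 j hjS).2 l hlS |>.asymm ((hyT.2 l hlT).2 j hjT)

theorem mem_dominantSet_filter_pos [Fintype ι] (hpos : ∃ j, 0 < f j y) :
    y ∈ dominantSet f {j | 0 < f j y} := by
  obtain ⟨j, hj⟩ := hpos
  refine ⟨⟨j, by simpa using hj⟩, fun j hj => ?_⟩
  simp only [Finset.mem_filter, Finset.mem_univ, true_and, not_lt] at hj ⊢
  exact ⟨hj, fun l hl => hl.trans_lt hj⟩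

end DominantSet

section ColouredPartition

variable {Y : Type*} [TopologicalSpace Y] {c κ : Type*} [Fintype c] [Fintype κ]

structure IsColouredPartitionOfUnity (h : c → κ → C(Y, ℝ)) : Prop where
  nonneg : ∀ i k y, 0 ≤ h i k y
  sum_eq_one : ∀ y, ∑ i, ∑ k, h i k y = 1
  mul_eq_zero : ∀ i {k k'}, k ≠ k' → ∀ y, h i k y * h i k' y = 0

namespace IsColouredPartitionOfUnity

variable {h : c → κ → C(Y, ℝ)}

theorem of_colouring [DecidableEq c] {g : κ → C(Y, ℝ)} (colour : κ → c)
    (hg0 : ∀ k y, 0 ≤ g k y) (hg1 : ∀ y, ∑ k, g k y = 1)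
    (hcolour : ∀ k k', k ≠ k' → colour k = colour k' → ∀ y, g k y * g k' y = 0) :
    IsColouredPartitionOfUnity fun i k => if colour k = i then g k else 0 where
  nonneg i k y := by split_ifs <;> simp [hg0]
  sum_eq_one y := by
    rw [Finset.sum_comm, ← hg1 y]
    refine Finset.sum_congr rfl fun k _ => ?_
    simp [apply_ite (fun g : C(Y, ℝ) => g y)]
  mul_eq_zero i k k' hk y := by
    split_ifs with h₁ h₂
    · exact hcolour k k' hk (h₁.trans h₂.symm) y
    all_goals simp

theorem comp_equiv (hh : IsColouredPartitionOfUnity h) {κ' : Type*} [Fintype κ'] (e : κ' ≃ κ) :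
    IsColouredPartitionOfUnity fun i k => h i (e k) where
  nonneg i k y := hh.nonneg i (e k) y
  sum_eq_one y := by
    rw [← hh.sum_eq_one y]
    exact Finset.sum_congr rfl fun i _ => e.sum_comp fun k => h i k y
  mul_eq_zero i k k' hk y := hh.mul_eq_zero i (e.injective.ne hk) y

theorem norm_sum_mul_le (hh : IsColouredPartitionOfUnity h) (y : Y) {a : c → κ → ℂ} {η : ℝ}
    (ha : ∀ i k, h i k y ≠ 0 → ‖a i k‖ ≤ η) : ‖∑ i, ∑ k, a i k * h i k y‖ ≤ η :=
  calc ‖∑ i, ∑ k, a i k * h i k y‖ ≤ ∑ i, ∑ k, ‖a i k * h i k y‖ :=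
        (norm_sum_le _ _).trans (Finset.sum_le_sum fun i _ => norm_sum_le _ _)
    _ ≤ ∑ i, ∑ k, η * h i k y := by
        refine Finset.sum_le_sum fun i _ => Finset.sum_le_sum fun k _ => ?_
        rw [norm_mul, Complex.norm_real, Real.norm_of_nonneg (hh.nonneg i k y)]
        rcases eq_or_ne (h i k y) 0 with h0 | h0
        · simp [h0]
        · exact mul_le_mul_of_nonneg_right (ha i k h0) (hh.nonneg i k y)
    _ = η := by simp only [← Finset.mul_sum, hh.sum_eq_one, mul_one]

end IsColouredPartitionOfUnity

end ColouredPartition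

section Existence

theorem PartitionOfUnity.IsSubordinate.mem_of_ne_zero {Y ι : Type*} [TopologicalSpace Y]
    {s : Set Y} {f : PartitionOfUnity ι Y s} {U : ι → Set Y} (hf : f.IsSubordinate U) {i : ι}
    {y : Y} (hy : f i y ≠ 0) : y ∈ U i :=
  hf i (subset_tsupport _ hy)

variable {Y : Type*} [TopologicalSpace Y] [NormalSpace Y] {n : ℕ}

theorem exists_isColouredPartitionOfUnity_of_ncard_le {ι : Type*} [Fintype ι] (V : ι → Set Y)
    (hVo : ∀ j, IsOpen (V j)) (hVc : ⋃ j, V j = univ)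
    (hmul : ∀ y, {j | y ∈ V j}.ncard ≤ n + 1) :
    ∃ (r : ℕ) (h : Fin (n + 1) → Fin r → C(Y, ℝ)) (p : Fin r → Y),
      IsColouredPartitionOfUnity h ∧ ∀ i k y, h i k y ≠ 0 → ∃ j, y ∈ V j ∧ p k ∈ V j := by
  classical
  obtain ⟨f, hfV⟩ := PartitionOfUnity.exists_isSubordinate_of_locallyFinite isClosed_univ V hVo
    (locallyFinite_of_finite V) hVc.ge
  set W := dominantSet fun j y => f j y
  have hWV {S y} (hy : y ∈ W S) {j} (hj : j ∈ S) : y ∈ V j :=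
    hfV.mem_of_ne_zero ((hy.2 j hj).1.ne')
  let κ := {S : Finset ι // (W S).Nonempty}
  have hcard (S : κ) : 1 ≤ #S.1 ∧ #S.1 ≤ n + 1 := by
    obtain ⟨y, hy⟩ := S.2
    refine ⟨hy.1.card_pos, ?_⟩
    calc #S.1 = (S.1 : Set ι).ncard := (ncard_coe_finset _).symm
      _ ≤ {j | y ∈ V j}.ncard := ncard_le_ncard (fun j hj => hWV hy hj) (toFinite _)
      _ ≤ n + 1 := hmul y
  obtain ⟨g, hgW⟩ := PartitionOfUnity.exists_isSubordinate_of_locallyFinite (ι := κ)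
    isClosed_univ (fun S => W S.1) (fun S => isOpen_dominantSet (fun j => (f j).continuous) _)
    (locallyFinite_of_finite _) fun y _ =>
      have hy := mem_dominantSet_filter_pos (f.exists_pos (mem_univ y))
      mem_iUnion.2 ⟨⟨_, y, hy⟩, hy⟩
  -- colour `S` by `#S - 1`: the sets `W S` with the same `#S` are pairwise disjoint
  have hcol := IsColouredPartitionOfUnity.of_colouring (g := fun S => g S)
    (fun S => (⟨#S.1 - 1, by have := hcard S; omega⟩ : Fin (n + 1))) g.nonneg
    (fun y => by simpa [finsum_eq_sum_of_fintype] using g.sum_eq_one (mem_univ y))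
    fun S T hST hc y => by
      have hcard' : #S.1 = #T.1 := by
        have := hcard S; have := hcard T; rw [Fin.mk.injEq] at hc; omega
      by_contra hne
      exact (disjoint_dominantSet (Subtype.coe_injective.ne hST) hcard').ne_of_mem
        (hgW.mem_of_ne_zero (left_ne_zero_of_mul hne))
        (hgW.mem_of_ne_zero (right_ne_zero_of_mul hne)) rfl
  let e := (Fintype.equivFin κ).symm
  refine ⟨_, _, fun k => (e k).2.some, hcol.comp_equiv e, fun i k y hy => ?_⟩
  have hyW : y ∈ W (e k).1 := by
    refine hgW.mem_of_ne_zero ?_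
    split_ifs at hy
    exacts [hy, absurd rfl hy]
  obtain ⟨j, hj⟩ := hyW.1
  exact ⟨j, hWV hyW hj, hWV (e k).2.some_mem hj⟩

end Existence

theorem CovDimLE.exists_isColouredPartitionOfUnity {Y : Type*} [TopologicalSpace Y]
    [CompactSpace Y] [NormalSpace Y] {n : ℕ} (hY : CovDimLE Y n) {α : Type*} (U : α → Set Y)
    (hUo : ∀ a, IsOpen (U a)) (hUc : ⋃ a, U a = univ) :
    ∃ (r : ℕ) (h : Fin (n + 1) → Fin r → C(Y, ℝ)) (p : Fin r → Y),
      IsColouredPartitionOfUnity h ∧ ∀ i k y, h i k y ≠ 0 → ∃ a, y ∈ U a ∧ p k ∈ U a := by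
  obtain ⟨t, ht⟩ := isCompact_univ.elim_finite_subcover U hUo hUc.ge
  let a : Fin #t → α := fun j => t.equivFin.symm j
  have hta : ⋃ j, U (a j) = univ := by
    refine eq_univ_of_univ_subset fun y hy => ?_
    obtain ⟨b, hb, hyb⟩ := mem_iUnion₂.1 (ht hy)
    exact mem_iUnion.2 ⟨t.equivFin ⟨b, hb⟩, by simpa [a] using hyb⟩
  obtain ⟨M, V, hVo, hVc, hVU, hmul⟩ := hY _ (fun j => U (a j)) (fun j => hUo _) hta
  obtain ⟨r, h, p, hh, hp⟩ := exists_isColouredPartitionOfUnity_of_ncard_le V hVo hVc hmul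
  refine ⟨r, h, p, hh, fun i k y hy => ?_⟩
  obtain ⟨j, hyj, hpj⟩ := hp i k y hy
  obtain ⟨l, hjl⟩ := hVU j
  exact ⟨a l, hjl hyj, hjl hpj⟩

section Factorization

variable {Y : Type*} [TopologicalSpace Y] {c κ : Type*}

noncomputable def evalAtPoints (p : c → κ → Y) : C(Y, ℂ) →⋆ₐ[ℂ] (c → κ → ℂ) where
  toFun g i k := g (p i k)
  map_one' := rfl
  map_mul' _ _ := rfl
  map_zero' := rfl
  map_add' _ _ := rfl
  commutes' _ := rfl
  map_star' _ := rfl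

@[simp]
theorem evalAtPoints_apply (p : c → κ → Y) (g : C(Y, ℂ)) (i : c) (k : κ) :
    evalAtPoints p g i k = g (p i k) :=
  rfl

variable [Fintype c] [Fintype κ]

noncomputable def colouredSum (h : c → κ → C(Y, ℝ)) : (c → κ → ℂ) →ₗ[ℂ] C(Y, ℂ) where
  toFun v := ∑ i, ∑ k,
    v i k • (ContinuousMap.mk ((↑) : ℝ → ℂ) Complex.continuous_ofReal).comp (h i k)
  map_add' v w := by simp only [Pi.add_apply, add_smul (M := C(Y, ℂ)), Finset.sum_add_distrib]
  map_smul' a v := by simp [Finset.smul_sum, smul_smul]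

@[simp]
theorem colouredSum_apply (h : c → κ → C(Y, ℝ)) (v : c → κ → ℂ) (y : Y) :
    colouredSum h v y = ∑ i, ∑ k, v i k * h i k y := by
  simp [colouredSum]

theorem colouredSum_ite_apply [DecidableEq c] (h : c → κ → C(Y, ℝ)) (i : c) (v : κ → ℂ) (y : Y) :
    colouredSum h (fun i' => if i' = i then v else 0) y = ∑ k, v k * h i k y := by
  simp [ite_apply, ite_mul]

namespace IsColouredPartitionOfUnity

variable {h : c → κ → C(Y, ℝ)}

theorem colouredSum_nonneg (hh : IsColouredPartitionOfUnity h) {v : c → κ → ℂ}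
    (hv : ∀ i k, 0 ≤ v i k) : 0 ≤ colouredSum h v := ContinuousMap.le_def.2 fun y => by
  rw [ContinuousMap.zero_apply, colouredSum_apply]
  exact Finset.sum_nonneg fun i _ => Finset.sum_nonneg fun k _ =>
    mul_nonneg (hv i k) (Complex.zero_le_real.2 (hh.nonneg i k y))

theorem colouredSum_mul_colouredSum_eq_zero [DecidableEq c] (hh : IsColouredPartitionOfUnity h)
    (i : c) {v w : κ → ℂ} (hvw : ∀ k, v k * w k = 0) :
    colouredSum h (fun i' => if i' = i then v else 0) *
      colouredSum h (fun i' => if i' = i then w else 0) = 0 := by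
  ext y
  rw [ContinuousMap.mul_apply, colouredSum_ite_apply, colouredSum_ite_apply, Finset.sum_mul_sum,
    ContinuousMap.zero_apply]
  refine Finset.sum_eq_zero fun k _ => Finset.sum_eq_zero fun k' _ => ?_
  rcases eq_or_ne k k' with rfl | hk
  · rw [mul_mul_mul_comm, hvw, zero_mul]
  · rw [mul_mul_mul_comm, ← Complex.ofReal_mul, hh.mul_eq_zero i hk, Complex.ofReal_zero, mul_zero]

variable [CompactSpace Y]

theorem norm_colouredSum_le (hh : IsColouredPartitionOfUnity h) (v : c → κ → ℂ) :
    ‖colouredSum h v‖ ≤ ‖v‖ :=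
  (ContinuousMap.norm_le _ (norm_nonneg v)).2 fun y => by
    rw [colouredSum_apply]
    exact hh.norm_sum_mul_le y fun i k _ => (norm_le_pi_norm (v i) k).trans (norm_le_pi_norm v i)

theorem norm_colouredSum_evalAtPoints_sub_le (hh : IsColouredPartitionOfUnity h)
    (p : c → κ → Y) (g : C(Y, ℂ)) {η : ℝ} (hη : 0 ≤ η)
    (hg : ∀ i k y, h i k y ≠ 0 → ‖g (p i k) - g y‖ ≤ η) :
    ‖colouredSum h (evalAtPoints p g) - g‖ ≤ η :=
  (ContinuousMap.norm_le _ hη).2 fun y => by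
    have hsum : colouredSum h (evalAtPoints p g) y - g y
        = ∑ i, ∑ k, (g (p i k) - g y) * h i k y := by
      simp only [colouredSum_apply, evalAtPoints_apply, sub_mul, Finset.sum_sub_distrib,
        ← Finset.mul_sum, ← Complex.ofReal_sum, hh.sum_eq_one, Complex.ofReal_one, mul_one]
    rw [ContinuousMap.sub_apply, hsum]
    exact hh.norm_sum_mul_le y (hg · · y)

end IsColouredPartitionOfUnity

end Factorization

theorem commutative_inclusion_dr_general {X Y : Type*}
    [MetricSpace X] [MetricSpace Y] [CompactSpace Y]
    (n : ℕ) (hY : CovDimLE Y n)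
    (ι : C(X, ℂ) →⋆ₐ[ℂ] C(Y, ℂ))
    (F : Finset C(X, ℂ)) (ε : ℝ) (hε : 0 < ε) :
    ∃ (r : ℕ) (ψ : C(X, ℂ) →⋆ₐ[ℂ] (Fin (n + 1) → Fin r → ℂ))
      (φ : (Fin (n + 1) → Fin r → ℂ) →ₗ[ℂ] C(Y, ℂ)),
      (∀ v, ‖φ v‖ ≤ ‖v‖) ∧
      (∀ v : Fin (n + 1) → Fin r → ℂ, (∀ i j, 0 ≤ v i j) → 0 ≤ φ v) ∧
      (∀ (i : Fin (n + 1)) (v w : Fin r → ℂ), (∀ j, v j * w j = 0) →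
        φ (fun i' => if i' = i then v else 0) *
          φ (fun i' => if i' = i then w else 0) = 0) ∧
      (∀ f ∈ F, ‖φ (ψ f) - ι f‖ < ε) := by
  let G : Y → F → ℂ := fun y f => ι f y
  have hG : Continuous G := continuous_pi fun f => (ι f).continuous
  obtain ⟨r, h, p, hh, hp⟩ := hY.exists_isColouredPartitionOfUnity
    (fun x => G ⁻¹' Metric.ball (G x) (ε / 4)) (fun x => Metric.isOpen_ball.preimage hG)
    (eq_univ_of_forall fun y => mem_iUnion.2 ⟨y, Metric.mem_ball_self (by positivity)⟩)
  refine ⟨r, (evalAtPoints fun _ => p).comp ι, colouredSum h, hh.norm_colouredSum_le,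
    fun v => hh.colouredSum_nonneg, fun i v w => hh.colouredSum_mul_colouredSum_eq_zero i,
    fun f hf => lt_of_le_of_lt (hh.norm_colouredSum_evalAtPoints_sub_le _ _ (by positivity)
      fun i k y hy => ?_) (half_lt_self hε)⟩
  obtain ⟨x, hyx, hpx⟩ := hp i k y hy
  calc ‖ι f (p k) - ι f y‖ = dist (G (p k) ⟨f, hf⟩) (G y ⟨f, hf⟩) := (dist_eq_norm _ _).symm
    _ ≤ dist (G (p k)) (G y) := dist_le_pi_dist _ _ _
    _ ≤ dist (G (p k)) (G x) + dist (G y) (G x) := dist_triangle_right _ _ _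
    _ ≤ ε / 4 + ε / 4 := add_le_add (le_of_lt hpx) (le_of_lt hyx)
    _ = ε / 2 := by ring

/-- The commutative content of Theorem 4.2: a unital inclusion
`C(X) ↪ C(Y)` with `dim Y ≤ n` admits `(n+1)`-colourable finite-dimensional
factorizations through abelian algebras, with `ψ` a unital *-homomorphism. -/
theorem commutative_inclusion_dr {X Y : Type*}
    [MetricSpace X] [CompactSpace X] [MetricSpace Y] [CompactSpace Y]
    (n : ℕ) (hY : CovDimLE Y n)
    (ι : C(X, ℂ) →⋆ₐ[ℂ] C(Y, ℂ)) (hinj : Function.Injective ι)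
    (F : Finset C(X, ℂ)) (ε : ℝ) (hε : 0 < ε) :
    ∃ (r : ℕ) (ψ : C(X, ℂ) →⋆ₐ[ℂ] (Fin (n + 1) → Fin r → ℂ))
      (φ : (Fin (n + 1) → Fin r → ℂ) →ₗ[ℂ] C(Y, ℂ)),
      (∀ v, ‖φ v‖ ≤ ‖v‖) ∧
      (∀ v : Fin (n + 1) → Fin r → ℂ, (∀ i j, 0 ≤ v i j) → 0 ≤ φ v) ∧
      (∀ (i : Fin (n + 1)) (v w : Fin r → ℂ), (∀ j, v j * w j = 0) →
        φ (fun i' => if i' = i then v else 0) *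
          φ (fun i' => if i' = i then w else 0) = 0) ∧
      (∀ f ∈ F, ‖φ (ψ f) - ι f‖ < ε) :=
  commutative_inclusion_dr_general n hY ι F ε hε
end
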